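/- arXiv:2411.13758 — 2 statements merged into one kernel-verified Lean document; each statement's English description precedes it below -/
import Mathlib

section
/- Let $d^k\in\mathbb{R}^{A_1}_+$ for $k\in N_1$ be defined by $d^k_{ij}=1$ if $i=k$ and $d^k_{ij}=0$ otherwise. Then $\bigcap_{k\in N_1}P_{\mathrm{MTZ}}(d^k)=\{x\in P_{\mathrm{AP}} : \sum_{ij\in C}x_{ij}\le|C|-1\ \text{for all}\ C\in\mathcal{C}_1\}$; moreover this set equals $\bigcap_{d\in D}P_{\mathrm{MTZ}}(d)$, the closure of all $d$-MTZ formulations. -/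
/-- Weight of a directed cycle given by nodes `v 0, …, v (k-1)` with arcs
`(v i, v ((i+1) % k))`. -/
def cycleSum {α : Type} (c : α → α → ℝ) (k : ℕ) (v : ℕ → α) : ℝ :=
  ∑ i ∈ Finset.range k, c (v i) (v ((i + 1) % k))

/-- A directed cycle: at least two distinct nodes `v 0, …, v (k-1)`. -/
def IsCycle {α : Type} (k : ℕ) (v : ℕ → α) : Prop :=
  2 ≤ k ∧ ∀ i < k, ∀ j < k, v i = v j → i = j

/-- A directed cycle avoiding node `0` (the paper's node 1), i.e. a member of `𝒞₁`. -/
def IsCycle1 {n : ℕ} (k : ℕ) (v : ℕ → Fin (n + 1)) : Prop :=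
  IsCycle k v ∧ ∀ i < k, v i ≠ 0

/-- The (restricted) assignment polytope `P_AP`. -/
def memPAP {n : ℕ} (x : Fin (n + 1) → Fin (n + 1) → ℝ) : Prop :=
  (∀ i j : Fin (n + 1), i ≠ j → 0 ≤ x i j ∧ x i j ≤ 1) ∧
  (∀ i : Fin (n + 1), ∑ j ∈ Finset.univ.erase i, x i j = 1) ∧
  (∀ i : Fin (n + 1), ∑ j ∈ Finset.univ.erase i, x j i = 1)

/-- Membership in `P_MTZ(d)`: the projection of the `d`-MTZ relaxation. -/
def memPMTZ {n : ℕ} (d x : Fin (n + 1) → Fin (n + 1) → ℝ) : Prop :=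
  memPAP x ∧ ∀ (k : ℕ) (v : ℕ → Fin (n + 1)), IsCycle1 k v →
    cycleSum x k v ≤ (k : ℝ) - cycleSum d k v

/-- Membership in `D` (strictly positive parameters). -/
def memD {n : ℕ} (d : Fin (n + 1) → Fin (n + 1) → ℝ) : Prop :=
  (∀ i j : Fin (n + 1), i ≠ 0 → j ≠ 0 → i ≠ j → 0 < d i j) ∧
  ∀ (k : ℕ) (v : ℕ → Fin (n + 1)), IsCycle1 k v → cycleSum d k v ≤ 1

/-!
A cycle `C ∈ 𝒞₁` leaves each of its nodes exactly once, so `dᵏ(C) ≤ 1` with equality when `k`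
lies on `C`; hence `⋂ₖ P_MTZ(dᵏ)` is cut out by the circuit inequalities `x(C) ≤ |C| - 1`.
Every `d ∈ D` has `d(C) ≤ 1`, so the circuit set lies in every `P_MTZ(d)`. Conversely, for `C`
through `k`, the parameters `(1 - ε) dᵏ + ε / n` lie in `D` (a cycle of `𝒞₁` has at most `n`
arcs) and give `x(C) ≤ |C| - 1 + ε`; let `ε → 0`.
-/

lemma cycleSum_affine {α : Type} (c : α → α → ℝ) (a b : ℝ) (m : ℕ) (v : ℕ → α) :
    cycleSum (fun i j => a * c i j + b) m v = a * cycleSum c m v + m * b := by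
  simp only [cycleSum, Finset.sum_add_distrib, Finset.mul_sum, Finset.sum_const,
    Finset.card_range, nsmul_eq_mul]

section TailIndicator

variable {α : Type} [DecidableEq α]

/-- The parameters `dᵏ` of the paper. -/
def tailInd (k : α) : α → α → ℝ := fun i _ => if i = k then 1 else 0

lemma cycleSum_tailInd (k : α) (m : ℕ) (v : ℕ → α) :
    cycleSum (tailInd k) m v = ((Finset.range m).filter (fun i => v i = k)).card := by
  simp [cycleSum, tailInd, Finset.sum_boole]

lemma IsCycle.cycleSum_tailInd_le_one {m : ℕ} {v : ℕ → α} (hv : IsCycle m v) (k : α) :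
    cycleSum (tailInd k) m v ≤ 1 := by
  rw [cycleSum_tailInd]
  exact_mod_cast (Finset.card_le_one.mpr fun a ha b hb => by
    simp only [Finset.mem_filter, Finset.mem_range] at ha hb
    exact hv.2 a ha.1 b hb.1 (ha.2.trans hb.2.symm) : _ ≤ 1)

lemma IsCycle.cycleSum_tailInd_head {m : ℕ} {v : ℕ → α} (hv : IsCycle m v) :
    cycleSum (tailInd (v 0)) m v = 1 := by
  refine le_antisymm (hv.cycleSum_tailInd_le_one _) ?_
  rw [cycleSum_tailInd, Nat.one_le_cast]
  exact Finset.card_pos.mpr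
    ⟨0, Finset.mem_filter.mpr ⟨Finset.mem_range.mpr (by have := hv.1; omega), rfl⟩⟩

end TailIndicator

lemma IsCycle1.length_le {n m : ℕ} {v : ℕ → Fin (n + 1)} (hv : IsCycle1 m v) : m ≤ n := by
  simpa using Finset.card_le_card_of_injOn v
    (s := Finset.range m) (t := Finset.univ.erase (0 : Fin (n + 1)))
    (fun a ha => Finset.mem_erase.mpr ⟨hv.2 a (Finset.mem_range.mp ha), Finset.mem_univ _⟩)
    (fun a ha b hb h => hv.1.2 a (Finset.mem_range.mp ha) b (Finset.mem_range.mp hb) h)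

section Closure

variable {n : ℕ}

def memPCircuit (x : Fin (n + 1) → Fin (n + 1) → ℝ) : Prop :=
  memPAP x ∧ ∀ (m : ℕ) (v : ℕ → Fin (n + 1)), IsCycle1 m v → cycleSum x m v ≤ (m : ℝ) - 1

lemma forall_memPMTZ_tailInd_iff (hn : 0 < n) (x : Fin (n + 1) → Fin (n + 1) → ℝ) :
    (∀ k : Fin (n + 1), k ≠ 0 → memPMTZ (tailInd k) x) ↔ memPCircuit x := by
  constructor
  · intro H
    have hlast : Fin.last n ≠ 0 := by rw [Ne, Fin.ext_iff]; simp; omega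
    refine ⟨(H _ hlast).1, fun m v hv => ?_⟩
    have := (H (v 0) (hv.2 0 (by have := hv.1.1; omega))).2 m v hv
    rwa [hv.1.cycleSum_tailInd_head] at this
  · rintro ⟨hx, hcirc⟩ k -
    exact ⟨hx, fun m v hv => by linarith [hcirc m v hv, hv.1.cycleSum_tailInd_le_one k]⟩

noncomputable def tailMix (n : ℕ) (k : Fin (n + 1)) (ε : ℝ) : Fin (n + 1) → Fin (n + 1) → ℝ :=
  fun i j => (1 - ε) * tailInd k i j + ε / n

lemma cycleSum_tailMix (k : Fin (n + 1)) (ε : ℝ) (m : ℕ) (v : ℕ → Fin (n + 1)) :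
    cycleSum (tailMix n k ε) m v = (1 - ε) * cycleSum (tailInd k) m v + m * (ε / n) :=
  cycleSum_affine _ _ _ m v

lemma memD_tailMix (hn : 0 < n) (k : Fin (n + 1)) {ε : ℝ} (hε0 : 0 < ε) (hε1 : ε ≤ 1) :
    memD (tailMix n k ε) := by
  refine ⟨fun i j _ _ _ => ?_, fun m v hv => ?_⟩
  · have hind : 0 ≤ tailInd k i j := by unfold tailInd; split_ifs <;> norm_num
    have : 0 < ε / n := by positivity
    simp only [tailMix]
    nlinarith
  · have hlen : (m : ℝ) * (ε / n) ≤ ε :=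
      calc (m : ℝ) * (ε / n) ≤ n * (ε / n) := by gcongr; exact_mod_cast hv.length_le
        _ = ε := by field_simp
    rw [cycleSum_tailMix]
    nlinarith [hv.1.cycleSum_tailInd_le_one k]

lemma memPCircuit_iff_forall_memD (hn : 0 < n) (x : Fin (n + 1) → Fin (n + 1) → ℝ) :
    memPCircuit x ↔ ∀ d : Fin (n + 1) → Fin (n + 1) → ℝ, memD d → memPMTZ d x := by
  constructor
  · rintro ⟨hx, hcirc⟩ d hd
    exact ⟨hx, fun m v hv => by linarith [hcirc m v hv, hd.2 m v hv]⟩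
  · intro H
    refine ⟨(H _ (memD_tailMix hn 0 one_pos le_rfl)).1, fun m v hv => ?_⟩
    refine le_of_forall_pos_le_add fun ε hε => ?_
    have hδ : 0 < min ε 1 := lt_min hε one_pos
    have := (H _ (memD_tailMix hn (v 0) hδ (min_le_right _ _))).2 m v hv
    rw [cycleSum_tailMix, hv.1.cycleSum_tailInd_head] at this
    have : 0 ≤ (m : ℝ) * (min ε 1 / n) := by positivity
    linarith [min_le_left ε 1]

end Closure

/-- The intersection of the formulations `P_MTZ(dᵏ)`, where `dᵏ_{ij} = 1` iff `i = k`,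
equals the set cut out by the circuit inequalities, and this set is the closure
`⋂_{d ∈ D} P_MTZ(d)`. -/
theorem stmt_11 (n : ℕ) (hn : 4 ≤ n + 1) (x : Fin (n + 1) → Fin (n + 1) → ℝ) :
    ((∀ k : Fin (n + 1), k ≠ 0 →
        memPMTZ (fun i _ => if i = k then (1 : ℝ) else 0) x)
      ↔ (memPAP x ∧ ∀ (m : ℕ) (v : ℕ → Fin (n + 1)), IsCycle1 m v →
          cycleSum x m v ≤ (m : ℝ) - 1)) ∧
    ((∀ k : Fin (n + 1), k ≠ 0 →
        memPMTZ (fun i _ => if i = k then (1 : ℝ) else 0) x)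
      ↔ ∀ d : Fin (n + 1) → Fin (n + 1) → ℝ, memD d → memPMTZ d x) := by
  have hn0 : 0 < n := by omega
  have hk := forall_memPMTZ_tailInd_iff hn0 x
  exact ⟨hk, hk.trans (memPCircuit_iff_forall_memD hn0 x)⟩
end

section
/- For $n\ge 4$: $\overline{P}_{\mathrm{SCF}}\subseteq\overline{P}_{\mathrm{DL}}\subseteq\overline{P}_{\mathrm{MTZ}}$, where $\overline{P}_{\mathrm{SCF}}=\{x\in P_{\mathrm{AP}}:\sum_{ij\in A(S)}x_{ij}\le|S|-1\ \forall S\subseteq N_1,|S|\ge 2\}$, $\overline{P}_{\mathrm{DL}}=\{x\in P_{\mathrm{AP}}: \sum_{ij\in C}(x_{ij}+x_{ji})-x_{lk}\le|C|-1\ \forall C\in\mathcal{C}_1,\ \forall kl\in C,\ |C|\ge 3;\ x_{ij}+x_{ji}\le 1\ \forall ij\in A_1\}$, and $\overline{P}_{\mathrm{MTZ}}=\{x\in P_{\mathrm{AP}}:\sum_{ij\in C}x_{ij}\le|C|-1\ \forall C\in\mathcal{C}_1\}$. Moreover, for $n\ge 5$ both inclusions are strict. -/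
/-- The closure `P̄_SCF`: `P_AP` with the clique inequalities
`∑_{ij ∈ A(S)} x_{ij} ≤ |S| - 1` for all `S ⊆ N₁`, `|S| ≥ 2`. -/
def memPSCFbar {n : ℕ} (x : Fin (n + 1) → Fin (n + 1) → ℝ) : Prop :=
  memPAP x ∧ ∀ S : Finset (Fin (n + 1)), (0 : Fin (n + 1)) ∉ S → 2 ≤ S.card →
    ∑ i ∈ S, ∑ j ∈ S.erase i, x i j ≤ (S.card : ℝ) - 1

/-- The closure `P̄_DL`: `P_AP` with, for each cycle `C ∈ 𝒞₁` with `|C| ≥ 3` and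
each arc `kl ∈ C`, the inequality `∑_{ij∈C}(x_{ij} + x_{ji}) - x_{lk} ≤ |C| - 1`,
plus `x_{ij} + x_{ji} ≤ 1` for all `ij ∈ A₁`. -/
def memPDLbar {n : ℕ} (x : Fin (n + 1) → Fin (n + 1) → ℝ) : Prop :=
  memPAP x ∧
  (∀ (k : ℕ) (v : ℕ → Fin (n + 1)), IsCycle1 k v → 3 ≤ k → ∀ i0 < k,
    (∑ i ∈ Finset.range k,
        (x (v i) (v ((i + 1) % k)) + x (v ((i + 1) % k)) (v i)))
      - x (v ((i0 + 1) % k)) (v i0) ≤ (k : ℝ) - 1) ∧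
  ∀ i j : Fin (n + 1), i ≠ 0 → j ≠ 0 → i ≠ j → x i j + x j i ≤ 1

/-- The closure `P̄_MTZ`: `P_AP` with the circuit inequalities. -/
def memPMTZbar {n : ℕ} (x : Fin (n + 1) → Fin (n + 1) → ℝ) : Prop :=
  memPAP x ∧ ∀ (k : ℕ) (v : ℕ → Fin (n + 1)), IsCycle1 k v →
    cycleSum x k v ≤ (k : ℝ) - 1


open Finset

section Cycles

variable {α : Type} {k : ℕ} {v : ℕ → α}

lemma succ_mod_of_lt {i : ℕ} (hi : i < k) :
    (i + 1) % k = if i + 1 = k then 0 else i + 1 := by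
  split_ifs with h
  · rw [h, Nat.mod_self]
  · exact Nat.mod_eq_of_lt (by omega)

lemma IsCycle.apply_ne_apply_succ (hv : IsCycle k v) {i : ℕ} (hi : i < k) :
    v i ≠ v ((i + 1) % k) := fun h => by
  have := hv.2 _ hi _ (Nat.mod_lt _ (by omega)) h
  have := hv.1
  rw [succ_mod_of_lt hi] at *
  split_ifs at * <;> omega

variable [DecidableEq α]

def cycleNodes (k : ℕ) (v : ℕ → α) : Finset α := (range k).image v

def cycleArcs (k : ℕ) (v : ℕ → α) : Finset (α × α) :=
  (range k).image fun i => (v i, v ((i + 1) % k))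

lemma IsCycle.card_cycleNodes (hv : IsCycle k v) : #(cycleNodes k v) = k := by
  rw [cycleNodes, card_image_of_injOn, card_range]
  exact fun i hi j hj => hv.2 i (mem_range.mp hi) j (mem_range.mp hj)

lemma IsCycle1.zero_notMem_cycleNodes {n : ℕ} {v : ℕ → Fin (n + 1)} (hv : IsCycle1 k v) :
    0 ∉ cycleNodes k v := by
  simp only [cycleNodes, mem_image, mem_range, not_exists, not_and]
  exact fun i hi h => hv.2 i hi h

lemma IsCycle.sum_cycleArcs (hv : IsCycle k v) (x : α → α → ℝ) :
    ∑ p ∈ cycleArcs k v, x p.1 p.2 = cycleSum x k v :=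
  sum_image fun i hi j hj h =>
    hv.2 i (mem_range.mp hi) j (mem_range.mp hj) (congrArg Prod.fst h)

lemma IsCycle.cycleArcs_subset_offDiag (hv : IsCycle k v) :
    cycleArcs k v ⊆ (cycleNodes k v).offDiag := by
  simp only [subset_iff, cycleArcs, cycleNodes, mem_image, mem_range, mem_offDiag]
  rintro _ ⟨i, hi, rfl⟩
  exact ⟨⟨i, hi, rfl⟩, ⟨_, Nat.mod_lt _ (by have := hv.1; omega), rfl⟩,
    hv.apply_ne_apply_succ hi⟩

lemma IsCycle.disjoint_cycleArcs_swap (hv : IsCycle k v) (hk : 3 ≤ k) :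
    Disjoint (cycleArcs k v) ((cycleArcs k v).image Prod.swap) := by
  simp only [disjoint_left, cycleArcs, mem_image, mem_range]
  rintro _ ⟨i, hi, rfl⟩ ⟨_, ⟨j, hj, rfl⟩, h⟩
  simp only [Prod.swap_prod_mk, Prod.mk.injEq] at h
  have h1 := hv.2 _ (Nat.mod_lt _ (by omega)) _ hi h.1
  have h2 := hv.2 _ hj _ (Nat.mod_lt _ (by omega)) h.2
  rw [succ_mod_of_lt hi, succ_mod_of_lt hj] at *
  split_ifs at * <;> omega

end Cycles

/-- The paper's inequality `∑_{ij ∈ A(S)} x_{ij} ≥ ∑_{ij ∈ C} (x_{ij} + x_{ji}) - x_{lk}`. -/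
lemma IsCycle.cycleSum_add_cycleSum_flip_sub_le {α : Type} [DecidableEq α] {k : ℕ}
    {v : ℕ → α} (hv : IsCycle k v) (hk : 3 ≤ k) {x : α → α → ℝ}
    (hx : ∀ i j, i ≠ j → 0 ≤ x i j) {i₀ : ℕ} (hi₀ : i₀ < k) :
    cycleSum x k v + cycleSum (flip x) k v - x (v ((i₀ + 1) % k)) (v i₀) ≤
      ∑ i ∈ cycleNodes k v, ∑ j ∈ (cycleNodes k v).erase i, x i j := by
  set A := cycleArcs k v ∪ (cycleArcs k v).image Prod.swap
  have hA : A ⊆ (cycleNodes k v).offDiag :=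
    union_subset hv.cycleArcs_subset_offDiag fun p hp => by
      obtain ⟨q, hq, rfl⟩ := mem_image.mp hp
      have := mem_offDiag.mp (hv.cycleArcs_subset_offDiag hq)
      exact mem_offDiag.mpr ⟨this.2.1, this.1, this.2.2.symm⟩
  have hsum : ∑ p ∈ A, x p.1 p.2 = cycleSum x k v + cycleSum (flip x) k v := by
    rw [sum_union (hv.disjoint_cycleArcs_swap hk), sum_image Prod.swap_injective.injOn,
      hv.sum_cycleArcs, ← hv.sum_cycleArcs (flip x)]
    rfl
  have hrev : (v ((i₀ + 1) % k), v i₀) ∈ A :=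
    mem_union_right _ (mem_image_of_mem _ (mem_image_of_mem _ (mem_range.mpr hi₀)))
  rw [← hsum, ← sum_erase_eq_sub hrev,
    ← sum_finset_product' (cycleNodes k v).offDiag _ _ fun p => by
      simp only [mem_offDiag, mem_erase]; tauto]
  exact sum_le_sum_of_subset_of_nonneg ((erase_subset _ _).trans hA)
    fun p hp _ => hx _ _ (mem_offDiag.mp hp).2.2

lemma sum_sum_erase_pair {α : Type} [DecidableEq α] {i j : α} (hij : i ≠ j)
    (x : α → α → ℝ) :
    ∑ a ∈ {i, j}, ∑ b ∈ ({i, j} : Finset α).erase a, x a b = x i j + x j i := by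
  rw [sum_pair hij, erase_insert (by simpa using hij), erase_insert_of_ne hij, erase_singleton,
    insert_empty, sum_singleton, sum_singleton]

theorem memPDLbar_of_memPSCFbar {n : ℕ} {x : Fin (n + 1) → Fin (n + 1) → ℝ}
    (hx : memPSCFbar x) : memPDLbar x := by
  obtain ⟨hap, hclique⟩ := hx
  refine ⟨hap, fun k v hv hk i₀ hi₀ => ?_, fun i j hi hj hij => ?_⟩
  · have hS := hclique _ hv.zero_notMem_cycleNodes (by rw [hv.1.card_cycleNodes]; omega)
    rw [hv.1.card_cycleNodes] at hS
    rw [sum_add_distrib]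
    exact (hv.1.cycleSum_add_cycleSum_flip_sub_le hk (fun i j h => (hap.1 i j h).1) hi₀).trans hS
  · have h := hclique {i, j} (by simp [hi.symm, hj.symm]) (by rw [card_pair hij])
    rw [sum_sum_erase_pair hij, card_pair hij] at h
    norm_num at h
    linarith

theorem memPMTZbar_of_memPDLbar {n : ℕ} {x : Fin (n + 1) → Fin (n + 1) → ℝ}
    (hx : memPDLbar x) : memPMTZbar x := by
  obtain ⟨hap, hcycle, hpair⟩ := hx
  refine ⟨hap, fun k v hv => ?_⟩
  obtain hk | hk := hv.1.1.eq_or_lt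
  · subst hk
    have h01 := hpair (v 0) (v 1) (hv.2 0 (by norm_num)) (hv.2 1 (by norm_num))
      (hv.1.apply_ne_apply_succ (by norm_num))
    norm_num [cycleSum, sum_range_succ]
    exact h01
  · have hDL := hcycle k v hv hk 0 (by omega)
    have hrev : x (v 1) (v 0) ≤ cycleSum (flip x) k v := by
      have := single_le_sum (s := range k) (f := fun i => x (v ((i + 1) % k)) (v i))
        (fun i hi => (hap.1 _ _ (hv.1.apply_ne_apply_succ (mem_range.mp hi)).symm).1)
        (mem_range.mpr (by omega : 0 < k))
      simpa [cycleSum, flip, Nat.mod_eq_of_lt (by omega : 1 < k)] using this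
    rw [sum_add_distrib, Nat.mod_eq_of_lt (by omega : 0 + 1 < k)] at hDL
    change cycleSum x k v + cycleSum (flip x) k v - _ ≤ _ at hDL
    linarith

section Criteria

variable {n : ℕ} {x : Fin (n + 1) → Fin (n + 1) → ℝ}

/-- The binding cycles have length three, where `3c - ℓ ≤ 2` is needed. -/
lemma memPDLbar_of_pair_le (hx : memPAP x) {c ℓ : ℝ} (hc : c ≤ 1) (hcℓ : 3 * c ≤ 2 + ℓ)
    (hpair : ∀ i j, i ≠ 0 → j ≠ 0 → i ≠ j → x i j + x j i ≤ c)
    (hlow : ∀ i j, i ≠ 0 → j ≠ 0 → i ≠ j → ℓ ≤ x i j) : memPDLbar x := by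
  refine ⟨hx, fun k v hv hk i₀ hi₀ => ?_, fun i j hi hj hij => (hpair i j hi hj hij).trans hc⟩
  have hmem : ∀ i, v ((i + 1) % k) ≠ 0 := fun i => hv.2 _ (Nat.mod_lt _ (by omega))
  have hsum : ∑ i ∈ range k, (x (v i) (v ((i + 1) % k)) + x (v ((i + 1) % k)) (v i)) ≤ k * c := by
    simpa using sum_le_card_nsmul _ _ c fun i hi =>
      hpair _ _ (hv.2 i (mem_range.mp hi)) (hmem i) (hv.1.apply_ne_apply_succ (mem_range.mp hi))
  have hrev := hlow _ _ (hmem i₀) (hv.2 i₀ hi₀) (hv.1.apply_ne_apply_succ hi₀).symm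
  have hk' : (3 : ℝ) ≤ k := by exact_mod_cast hk
  nlinarith

lemma memPMTZbar_of_le_half (hx : memPAP x)
    (h : ∀ i j, i ≠ 0 → j ≠ 0 → i ≠ j → x i j ≤ 1 / 2) : memPMTZbar x := by
  refine ⟨hx, fun k v hv => ?_⟩
  have hsum : cycleSum x k v ≤ k * (1 / 2) := by
    simpa [cycleSum] using sum_le_card_nsmul _ _ (1 / 2) fun i hi =>
      h _ _ (hv.2 i (mem_range.mp hi)) (hv.2 _ (Nat.mod_lt _ (by have := hv.1.1; omega)))
        (hv.1.apply_ne_apply_succ (mem_range.mp hi))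
  have hk : (2 : ℝ) ≤ k := by exact_mod_cast hv.1.1
  linarith

/-- The clique sum of such an `S` adds up the rows of `S`, so it equals `|S|`. -/
lemma not_memPSCFbar_of_closed (hx : memPAP x) {S : Finset (Fin (n + 1))} (h0 : 0 ∉ S)
    (hS : 2 ≤ #S) (hclosed : ∀ i ∈ S, ∀ j ∉ S, x i j = 0) : ¬ memPSCFbar x := by
  rintro ⟨-, hclique⟩
  have hrow : ∀ i ∈ S, ∑ j ∈ S.erase i, x i j = 1 := fun i hi => by
    rw [← hx.2.1 i]
    refine sum_subset (erase_subset_erase _ (subset_univ _)) fun j hj hjS => hclosed i hi j ?_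
    simp_all
  have := hclique S h0 hS
  rw [sum_congr rfl hrow, sum_const, nsmul_one] at this
  linarith

end Criteria

section BlockUniform

variable {α : Type} [DecidableEq α] {T : Finset α} {i j : α}

noncomputable def uniformOn (T : Finset α) (i j : α) : ℝ :=
  if i ≠ j ∧ i ∈ T ∧ j ∈ T then ((#T : ℝ) - 1)⁻¹ else 0

lemma uniformOn_comm : uniformOn T i j = uniformOn T j i := by
  unfold uniformOn
  rw [if_congr (by rw [ne_comm, and_comm (a := i ∈ T)]) rfl rfl]

lemma uniformOn_of_notMem_left (hi : i ∉ T) : uniformOn T i j = 0 := by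
  simp [uniformOn, hi]

lemma uniformOn_of_notMem_right (hj : j ∉ T) : uniformOn T i j = 0 := by
  simp [uniformOn, hj]

lemma uniformOn_of_mem (hij : i ≠ j) (hi : i ∈ T) (hj : j ∈ T) :
    uniformOn T i j = ((#T : ℝ) - 1)⁻¹ := by
  simp [uniformOn, hij, hi, hj]

lemma uniformOn_nonneg : 0 ≤ uniformOn T i j := by
  unfold uniformOn
  split_ifs with h
  · have : (1 : ℝ) ≤ #T := by exact_mod_cast card_pos.mpr ⟨i, h.2.1⟩
    exact inv_nonneg.mpr (by linarith)
  · exact le_rfl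

lemma uniformOn_le_inv {m : ℕ} (hm : 0 < m) (hT : m + 1 ≤ #T) :
    uniformOn T i j ≤ (m : ℝ)⁻¹ := by
  unfold uniformOn
  split_ifs
  · have : (m : ℝ) + 1 ≤ #T := by exact_mod_cast hT
    exact inv_anti₀ (by positivity) (by linarith)
  · positivity

variable [Fintype α] {S : Finset α}

lemma sum_uniformOn_row (hT : 2 ≤ #T) (i : α) :
    ∑ j ∈ univ.erase i, uniformOn T i j = if i ∈ T then 1 else 0 := by
  split_ifs with hi
  · have hfilter : {j ∈ univ.erase i | i ≠ j ∧ i ∈ T ∧ j ∈ T} = T.erase i := by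
      ext j
      simp only [mem_filter, mem_erase, mem_univ]
      tauto
    have hcard : ((#T - 1 : ℕ) : ℝ) = #T - 1 := by
      rw [Nat.cast_sub (by omega), Nat.cast_one]
    have hT' : (2 : ℝ) ≤ #T := by exact_mod_cast hT
    unfold uniformOn
    rw [← sum_filter, hfilter, sum_const, card_erase_of_mem hi, nsmul_eq_mul, hcard,
      mul_inv_cancel₀ (by linarith)]
  · exact sum_eq_zero fun j _ => uniformOn_of_notMem_left hi

noncomputable def blockUniform (S : Finset α) : α → α → ℝ := uniformOn S + uniformOn Sᶜ

lemma blockUniform_comm : blockUniform S i j = blockUniform S j i := by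
  simp only [blockUniform, Pi.add_apply, uniformOn_comm (i := i)]

lemma blockUniform_of_mem (hi : i ∈ S) : blockUniform S i j = uniformOn S i j := by
  simp [blockUniform, uniformOn_of_notMem_left (notMem_compl.mpr hi)]

lemma blockUniform_of_notMem (hi : i ∉ S) : blockUniform S i j = uniformOn Sᶜ i j := by
  simp [blockUniform, uniformOn_of_notMem_left hi]

end BlockUniform

lemma memPAP_blockUniform {n : ℕ} {S : Finset (Fin (n + 1))} (hS : 2 ≤ #S) (hSc : 2 ≤ #Sᶜ) :
    memPAP (blockUniform S) := by
  have hrow : ∀ i, ∑ j ∈ univ.erase i, blockUniform S i j = 1 := fun i => by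
    simp only [blockUniform, Pi.add_apply, sum_add_distrib, sum_uniformOn_row hS,
      sum_uniformOn_row hSc, mem_compl]
    split_ifs <;> simp_all
  refine ⟨fun i j _ => ⟨?_, ?_⟩, hrow, fun i => ?_⟩
  · exact add_nonneg uniformOn_nonneg uniformOn_nonneg
  · by_cases hi : i ∈ S
    · simpa [blockUniform_of_mem hi] using uniformOn_le_inv (i := i) (j := j) one_pos hS
    · simpa [blockUniform_of_notMem hi] using uniformOn_le_inv (i := i) (j := j) one_pos hSc
  · simpa only [blockUniform_comm] using hrow i

/-- On the block of the `n - 1 ≥ 4` nodes other than `0` and `n`, pair sums are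
`2 / (n - 2) ≤ 2 / 3`. -/
lemma exists_memPDLbar_not_memPSCFbar_of_five_le {n : ℕ} (hn : 5 ≤ n) :
    ∃ x : Fin (n + 1) → Fin (n + 1) → ℝ, memPDLbar x ∧ ¬ memPSCFbar x := by
  set S : Finset (Fin (n + 1)) := {0, Fin.last n}ᶜ
  have h0 : (0 : Fin (n + 1)) ≠ Fin.last n := by simp [Fin.ext_iff]; omega
  have hS : #S = n - 1 := by
    simp only [S, card_compl, card_pair h0, Fintype.card_fin]; omega
  have hSc : #Sᶜ = 2 := by simp only [S, compl_compl, card_pair h0]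
  have hx := memPAP_blockUniform (S := S) (by omega) (by omega)
  have hle : ∀ i j, i ≠ 0 → j ≠ 0 → i ≠ j → blockUniform S i j ≤ 1 / 3 := fun i j hi hj hij => by
    by_cases hiS : i ∈ S
    · simpa [blockUniform_of_mem hiS] using
        uniformOn_le_inv (i := i) (j := j) (m := 3) (by norm_num) (by omega)
    · have hiL : i = Fin.last n := by simpa [S, hi] using hiS
      have hjS : j ∈ S := by simp [S, hj, ← hiL, Ne.symm hij]
      rw [blockUniform_of_notMem hiS, uniformOn_of_notMem_right (notMem_compl.mpr hjS)]
      norm_num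
  refine ⟨blockUniform S, memPDLbar_of_pair_le hx (c := 2 / 3) (ℓ := 0) (by norm_num) (by norm_num)
    (fun i j hi hj hij => ?_) (fun i j _ _ hij => (hx.1 i j hij).1),
    not_memPSCFbar_of_closed hx (S := S) (by simp [S]) (by omega) fun i hi j hj => ?_⟩
  · linarith [hle i j hi hj hij, hle j i hj hi hij.symm]
  · rw [blockUniform_of_mem hi, uniformOn_of_notMem_right hj]

def triangle {n : ℕ} (hn : 3 ≤ n) (i : ℕ) : Fin (n + 1) := ⟨i % 3 + 1, by omega⟩

lemma isCycle1_triangle {n : ℕ} (hn : 3 ≤ n) : IsCycle1 3 (triangle hn) := by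
  refine ⟨⟨by norm_num, fun i hi j hj h => ?_⟩, fun i _ h => ?_⟩
  · have : i % 3 + 1 = j % 3 + 1 := congrArg Fin.val h
    omega
  · exact absurd (congrArg Fin.val h) (Nat.succ_ne_zero _)

/-- The triangle block carries `1/2` on all its arcs, too little for any circuit inequality but
`5/2 > 2` in its DL inequality. -/
lemma exists_memPMTZbar_not_memPDLbar {n : ℕ} (hn : 4 ≤ n) :
    ∃ x : Fin (n + 1) → Fin (n + 1) → ℝ, memPMTZbar x ∧ ¬ memPDLbar x := by
  have h3 : 3 ≤ n := by omega
  have hv := isCycle1_triangle h3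
  set S := cycleNodes 3 (triangle h3)
  have hS : #S = 3 := hv.1.card_cycleNodes
  have hSc : #Sᶜ = n - 2 := by rw [card_compl, hS, Fintype.card_fin]; omega
  have hx := memPAP_blockUniform (S := S) (by omega) (by omega)
  refine ⟨blockUniform S, memPMTZbar_of_le_half hx fun i j hi hj hij => ?_, fun hDL => ?_⟩
  · by_cases hiS : i ∈ S
    · rw [blockUniform_of_mem hiS]
      exact (uniformOn_le_inv (m := 2) two_pos (by omega)).trans (by norm_num)
    · rw [blockUniform_of_notMem hiS]
      by_cases hjS : j ∈ S
      · rw [uniformOn_of_notMem_right (notMem_compl.mpr hjS)]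
        norm_num
      · have hcard : 2 < #Sᶜ := two_lt_card.mpr ⟨0, mem_compl.mpr hv.zero_notMem_cycleNodes,
          i, mem_compl.mpr hiS, j, mem_compl.mpr hjS, hi.symm, hj.symm, hij⟩
        exact (uniformOn_le_inv (m := 2) two_pos hcard).trans (by norm_num)
  · have hhalf : ∀ i < 3, ∀ j < 3, i ≠ j → blockUniform S (triangle h3 i) (triangle h3 j) = 1 / 2 :=
      fun i hi j hj hij => by
        have hiS : triangle h3 i ∈ S := mem_image_of_mem _ (mem_range.mpr hi)
        rw [blockUniform_of_mem hiS, uniformOn_of_mem (fun h => hij (hv.1.2 i hi j hj h)) hiS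
          (mem_image_of_mem _ (mem_range.mpr hj)), hS]
        norm_num
    have h := hDL.2.1 3 _ hv le_rfl 0 (by norm_num)
    norm_num [sum_range_succ, hhalf] at h

/-- Twenty times a witness on five nodes, where a violated clique inequality must be on three nodes
(on `{1, 2, 3, 4}` the clique sum is `4 - ∑ᵢ x_{i0} = 3`). Here `{1, 2, 3}` carries `7/20 > 1/3` on
each arc, yet `5 · 7/20 ≤ 2` keeps its DL inequalities. -/
def fiveNodeWeights : Fin 5 → Fin 5 → ℕ :=
  ![![0, 3, 3, 3, 11], ![3, 0, 7, 7, 3], ![3, 7, 0, 7, 3], ![3, 7, 7, 0, 3], ![11, 3, 3, 3, 0]]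

lemma exists_memPDLbar_not_memPSCFbar_fin_five :
    ∃ x : Fin (4 + 1) → Fin (4 + 1) → ℝ, memPDLbar x ∧ ¬ memPSCFbar x := by
  set x : Fin 5 → Fin 5 → ℝ := fun i j => (fiveNodeWeights i j : ℝ) / 20
  have hle : ∀ i j, fiveNodeWeights i j ≤ 20 := by decide
  have hrow : ∀ i, ∑ j ∈ univ.erase i, fiveNodeWeights i j = 20 := by decide
  have hcol : ∀ i, ∑ j ∈ univ.erase i, fiveNodeWeights j i = 20 := by decide
  have hpair : ∀ i j : Fin 5, i ≠ 0 → j ≠ 0 → i ≠ j →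
      fiveNodeWeights i j + fiveNodeWeights j i ≤ 14 ∧ 2 ≤ fiveNodeWeights i j := by decide
  have hclique : ∑ i ∈ ({1, 2, 3} : Finset (Fin 5)), ∑ j ∈ ({1, 2, 3} : Finset (Fin 5)).erase i,
      fiveNodeWeights i j = 42 := by decide
  have hx : memPAP x := by
    refine ⟨fun i j _ => ⟨by positivity, ?_⟩, fun i => ?_, fun i => ?_⟩
    · rw [div_le_one (by norm_num)]
      exact_mod_cast hle i j
    · rw [← sum_div, ← Nat.cast_sum, hrow]; norm_num
    · rw [← sum_div, ← Nat.cast_sum, hcol]; norm_num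
  refine ⟨x, memPDLbar_of_pair_le hx (c := 7 / 10) (ℓ := 1 / 10) (by norm_num) (by norm_num)
    (fun i j hi hj hij => ?_) (fun i j hi hj hij => ?_), fun hSCF => ?_⟩
  · rw [← add_div, div_le_iff₀ (by norm_num)]
    norm_num
    exact_mod_cast (hpair i j hi hj hij).1
  · rw [le_div_iff₀ (by norm_num)]
    norm_num
    exact_mod_cast (hpair i j hi hj hij).2
  · have h := hSCF.2 {1, 2, 3} (by decide) (by decide)
    simp only [x, ← sum_div, ← Nat.cast_sum, hclique] at h
    rw [show #({1, 2, 3} : Finset (Fin 5)) = 3 by decide] at h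
    norm_num at h

theorem stmt_19_general (n : ℕ) :
    (∀ x : Fin (n + 1) → Fin (n + 1) → ℝ, memPSCFbar x → memPDLbar x) ∧
    (∀ x : Fin (n + 1) → Fin (n + 1) → ℝ, memPDLbar x → memPMTZbar x) ∧
    (5 ≤ n + 1 →
      (∃ x : Fin (n + 1) → Fin (n + 1) → ℝ, memPDLbar x ∧ ¬ memPSCFbar x) ∧
      (∃ x : Fin (n + 1) → Fin (n + 1) → ℝ, memPMTZbar x ∧ ¬ memPDLbar x)) := by
  refine ⟨fun _ => memPDLbar_of_memPSCFbar, fun _ => memPMTZbar_of_memPDLbar, fun h5 =>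
    ⟨?_, exists_memPMTZbar_not_memPDLbar (by omega)⟩⟩
  obtain rfl | hn := (show n = 4 ∨ 5 ≤ n by omega)
  · exact exists_memPDLbar_not_memPSCFbar_fin_five
  · exact exists_memPDLbar_not_memPSCFbar_of_five_le hn

/-- For `n ≥ 4` (here `n + 1 ≥ 4` nodes): `P̄_SCF ⊆ P̄_DL ⊆ P̄_MTZ`, and for
`n ≥ 5` (here `n + 1 ≥ 5` nodes) both inclusions are strict. -/
theorem stmt_19 (n : ℕ) (hn : 4 ≤ n + 1) :
    (∀ x : Fin (n + 1) → Fin (n + 1) → ℝ, memPSCFbar x → memPDLbar x) ∧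
    (∀ x : Fin (n + 1) → Fin (n + 1) → ℝ, memPDLbar x → memPMTZbar x) ∧
    (5 ≤ n + 1 →
      (∃ x : Fin (n + 1) → Fin (n + 1) → ℝ, memPDLbar x ∧ ¬ memPSCFbar x) ∧
      (∃ x : Fin (n + 1) → Fin (n + 1) → ℝ, memPMTZbar x ∧ ¬ memPDLbar x)) :=
  stmt_19_general n
end
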